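/- With C(a,b) defined as the K-stability polynomial C(a,b) = I₁(a,b)·J₂(a,b) - I₂(a,b)·J₁(a,b) (with I₁, I₂, J₁, J₂ as below), for every real a with 0 < a < 1/2 one has C(a, 1/2) > 249(1-2a)^2/61440; in particular C(a, 1/2) > 0. -/
import Mathlib

noncomputable def I₁ (a b : ℝ) : ℝ := (b^4 - a^4 - 2*(b^3 - a^3) + b^2 - a^2)/4
noncomputable def I₂ (a b : ℝ) : ℝ := (-24*(b^5 - a^5) + 45*(b^4 - a^4) - 20*(b^3 - a^3))/120
noncomputable def J₁ (a b : ℝ) : ℝ := (4*a^3 - 3*(a^2 + b^2) + 3*b - a)/2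
noncomputable def J₂ (a b : ℝ) : ℝ := (-b^4 - 7*a^4 + 6*(b^3 + a^3) + 4*a^2)/4
noncomputable def C (a b : ℝ) : ℝ := I₁ a b * J₂ a b - I₂ a b * J₁ a b

theorem C_at_half_pos (a : ℝ) (ha : 0 < a) (ha' : a < 1/2) :
    C a (1/2) > 249*(1 - 2*a)^2/61440 ∧ C a (1/2) > 0 := by
  have h : C a (1/2) > 249*(1 - 2*a)^2/61440 := by
    simp only [C, I₁, I₂, J₁, J₂]
    nlinarith [sq_nonneg a, sq_nonneg (1-2*a), sq_nonneg (a*(1-2*a)), sq_nonneg (a^2*(1-2*a)), sq_nonneg (a*(1-2*a)^2), sq_nonneg (a^3*(1-2*a)), mul_pos ha (sub_pos.2 ha'), sq_nonneg (a^2-a), sq_nonneg (a^3*(1-2*a)^2), mul_pos (mul_pos ha ha) (sub_pos.2 ha')]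
  exact ⟨h, lt_of_le_of_lt (by positivity) h⟩
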